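/- Let f : ℝ_{>0}^n → ℝ, f(x) = ∑_{μ ∈ σ(f)} c_μ x^μ be a signomial. Assume there exists v ∈ ℝ^n such that σ(f) ⊆ N(f)_v ∪ N(f)_{-v}, and that both f|_{N(f)_v}^{-1}(ℝ_{<0}) and f|_{N(f)_{-v}}^{-1}(ℝ_{<0}) have exactly one connected component. If there exist negative exponent vectors β₁ ∈ σ_-(f) ∩ N(f)_v and β₂ ∈ σ_-(f) ∩ N(f)_{-v} such that Conv({β₁, β₂}) is an edge of N(f), then f^{-1}(ℝ_{<0}) has exactly one connected component. -/

import Mathlib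

open Finset

/-- The signomial `x ↦ ∑_{μ ∈ S} c μ * x^μ` (with real exponents, via `Real.rpow`). -/
noncomputable def sig {n : ℕ} (S : Finset (Fin n → ℝ)) (c : (Fin n → ℝ) → ℝ)
    (x : Fin n → ℝ) : ℝ :=
  ∑ μ ∈ S, c μ * ∏ i, x i ^ μ i

open Classical in
/-- The restriction `f|_F` of the signomial to a subset `F ⊆ ℝⁿ` of exponent vectors. -/
noncomputable def sigOn {n : ℕ} (S : Finset (Fin n → ℝ)) (c : (Fin n → ℝ) → ℝ)
    (F : Set (Fin n → ℝ)) (x : Fin n → ℝ) : ℝ :=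
  ∑ μ ∈ S, if μ ∈ F then c μ * ∏ i, x i ^ μ i else 0

/-- `f⁻¹(ℝ_{<0})`: the points of the positive orthant where the signomial is negative. -/
def negSet {n : ℕ} (S : Finset (Fin n → ℝ)) (c : (Fin n → ℝ) → ℝ) : Set (Fin n → ℝ) :=
  {x | (∀ i, 0 < x i) ∧ sig S c x < 0}

/-- `(f|_F)⁻¹(ℝ_{<0})`. -/
def negSetOn {n : ℕ} (S : Finset (Fin n → ℝ)) (c : (Fin n → ℝ) → ℝ)
    (F : Set (Fin n → ℝ)) : Set (Fin n → ℝ) :=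
  {x | (∀ i, 0 < x i) ∧ sigOn S c F x < 0}

/-- `σ₊(f)`: the positive exponent vectors. -/
def sigPosSupp {n : ℕ} (S : Finset (Fin n → ℝ)) (c : (Fin n → ℝ) → ℝ) : Set (Fin n → ℝ) :=
  {μ | μ ∈ S ∧ 0 < c μ}

/-- `σ₋(f)`: the negative exponent vectors. -/
def sigNegSupp {n : ℕ} (S : Finset (Fin n → ℝ)) (c : (Fin n → ℝ) → ℝ) : Set (Fin n → ℝ) :=
  {μ | μ ∈ S ∧ c μ < 0}

/-- The hyperplane `H_{v,a}`. -/
def Hyp {n : ℕ} (v : Fin n → ℝ) (a : ℝ) : Set (Fin n → ℝ) :=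
  {μ | ∑ i, v i * μ i = a}

/-- The closed half-space `H⁺_{v,a}`. -/
def Hplus {n : ℕ} (v : Fin n → ℝ) (a : ℝ) : Set (Fin n → ℝ) :=
  {μ | a ≤ ∑ i, v i * μ i}

/-- The closed half-space `H⁻_{v,a}`. -/
def Hminus {n : ℕ} (v : Fin n → ℝ) (a : ℝ) : Set (Fin n → ℝ) :=
  {μ | ∑ i, v i * μ i ≤ a}

/-- The open half-space `H^{+,∘}_{v,a}`. -/
def HplusO {n : ℕ} (v : Fin n → ℝ) (a : ℝ) : Set (Fin n → ℝ) :=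
  {μ | a < ∑ i, v i * μ i}

/-- The open half-space `H^{-,∘}_{v,a}`. -/
def HminusO {n : ℕ} (v : Fin n → ℝ) (a : ℝ) : Set (Fin n → ℝ) :=
  {μ | ∑ i, v i * μ i < a}

/-- `U` is a connected component of `X` (a maximal nonempty preconnected subset of `X`). -/
def IsConnComp {n : ℕ} (X U : Set (Fin n → ℝ)) : Prop :=
  U.Nonempty ∧ U ⊆ X ∧ IsPreconnected U ∧
    ∀ W, U ⊆ W → W ⊆ X → IsPreconnected W → W = U

/-- The number (cardinality) of connected components of `X`. -/
noncomputable def compCard {n : ℕ} (X : Set (Fin n → ℝ)) : Cardinal :=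
  Cardinal.mk {U : Set (Fin n → ℝ) // IsConnComp X U}

/-- The face `N(f)_v` of the Newton polytope of a signomial with support `S`,
with outer normal vector `v`. -/
def faceOf {n : ℕ} (S : Finset (Fin n → ℝ)) (v : Fin n → ℝ) : Set (Fin n → ℝ) :=
  {ω ∈ convexHull ℝ (↑S : Set (Fin n → ℝ)) |
    ∀ μ ∈ convexHull ℝ (↑S : Set (Fin n → ℝ)), ∑ i, v i * μ i ≤ ∑ i, v i * ω i}

/-!
Write `f = f₁ + f₂` with `f₁ = f|_{N(f)_v}` and `f₂ = f|_{N(f)_{-v}}`; their supports lie on the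
hyperplanes `v·μ = a` and `v·μ = b`, and `b ≤ a`. If `a = b` then `f = f₁`. Otherwise the flow
`x ↦ t^v x = (x_i t^{v_i})_i` turns `f` into `t^a f₁ + t^b f₂`. At a point with `f < 0` and
`f₁ < 0` the whole ray `t ≥ 1` stays in `f < 0`, and for `t` large the negative set of `f₁` is
carried into that of `f`; hence two such points are joined through the flowed image of a path in
`f₁⁻¹(ℝ<0)`. The same holds for `f₂` with `t → 0`. Every point of `f⁻¹(ℝ<0)` has `f₁ < 0` or
`f₂ < 0`, and the edge supplies a point where both are negative: flowing along its normal `w`,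
the negative terms at `β₁` and `β₂` dominate `f₁` and `f₂`.
-/

open Finset Filter Topology

section ConnectedComponents

variable {n : ℕ}

lemma isConnComp_connectedComponentIn {X : Set (Fin n → ℝ)} {x : Fin n → ℝ} (hx : x ∈ X) :
    IsConnComp X (connectedComponentIn X x) :=
  ⟨⟨x, mem_connectedComponentIn hx⟩, connectedComponentIn_subset X x,
    isPreconnected_connectedComponentIn, fun _ hUW hWX hW =>
      (hW.subset_connectedComponentIn (hUW (mem_connectedComponentIn hx)) hWX).antisymm hUW⟩

lemma compCard_eq_one_iff {X : Set (Fin n → ℝ)} :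
    compCard X = 1 ↔ X.Nonempty ∧ IsPreconnected X := by
  rw [compCard, Cardinal.eq_one_iff_unique]
  constructor
  · rintro ⟨hsub, ⟨U, hU⟩⟩
    have hXU : X = U := by
      refine subset_antisymm (fun x hx => ?_) hU.2.1
      have h : (⟨_, isConnComp_connectedComponentIn hx⟩ : {V // IsConnComp X V}) = ⟨U, hU⟩ :=
        Subsingleton.elim _ _
      have hcc : connectedComponentIn X x = U := congrArg Subtype.val h
      exact hcc ▸ mem_connectedComponentIn hx
    exact hXU ▸ ⟨hU.1, hU.2.2.1⟩
  · rintro ⟨hne, hpc⟩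
    have hX : IsConnComp X X := ⟨hne, subset_rfl, hpc, fun _ hXW hWX _ => hWX.antisymm hXW⟩
    refine ⟨⟨fun U V => Subtype.ext ?_⟩, ⟨⟨X, hX⟩⟩⟩
    exact (U.2.2.2.2 X U.2.2.1 subset_rfl hpc).symm.trans (V.2.2.2.2 X V.2.2.1 subset_rfl hpc)

end ConnectedComponents

section Faces

variable {n : ℕ} {S : Finset (Fin n → ℝ)} {v : Fin n → ℝ}

lemma dotProduct_le_of_mem_faceOf {ω μ : Fin n → ℝ} (hω : ω ∈ faceOf S v) (hμ : μ ∈ S) :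
    v ⬝ᵥ μ ≤ v ⬝ᵥ ω :=
  hω.2 μ (subset_convexHull ℝ _ hμ)

lemma dotProduct_eq_of_mem_faceOf {ω ω' : Fin n → ℝ} (hω : ω ∈ faceOf S v)
    (hω' : ω' ∈ faceOf S v) : v ⬝ᵥ ω = v ⬝ᵥ ω' :=
  (hω'.2 ω hω.1).antisymm (hω.2 ω' hω'.1)

lemma mem_faceOf_of_forall_le {ω : Fin n → ℝ} (hω : ω ∈ S) (h : ∀ μ ∈ S, v ⬝ᵥ μ ≤ v ⬝ᵥ ω) :
    ω ∈ faceOf S v := by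
  have hlin : IsLinearMap ℝ (v ⬝ᵥ ·) := ⟨dotProduct_add v, fun r μ => dotProduct_smul r v μ⟩
  exact ⟨subset_convexHull ℝ _ hω,
    fun μ hμ => convexHull_min h (convex_halfSpace_le hlin _) hμ⟩

/-- The edge `[β₁, β₂]` meets the level set `v ⬝ᵥ μ = v ⬝ᵥ β₁` only in `β₁`. -/
lemma dotProduct_lt_of_convexHull_pair_eq_faceOf {w β₁ β₂ μ : Fin n → ℝ}
    (hedge : convexHull ℝ {β₁, β₂} = faceOf S w) (hβ : v ⬝ᵥ β₂ ≠ v ⬝ᵥ β₁)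
    (hμ : μ ∈ S) (hμv : v ⬝ᵥ μ = v ⬝ᵥ β₁) (hμβ : μ ≠ β₁) : w ⬝ᵥ μ < w ⬝ᵥ β₁ := by
  have hβ₁ : β₁ ∈ faceOf S w := hedge ▸ subset_convexHull ℝ _ (Set.mem_insert _ _)
  refine (dotProduct_le_of_mem_faceOf hβ₁ hμ).lt_of_ne fun heq => hμβ ?_
  have hμw : μ ∈ convexHull ℝ {β₁, β₂} :=
    hedge ▸ ⟨subset_convexHull ℝ _ hμ, fun ν hν => (hβ₁.2 ν hν).trans heq.ge⟩
  rw [convexHull_pair] at hμw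
  obtain ⟨p, q, -, -, hpq, rfl⟩ := hμw
  simp only [dotProduct_add, dotProduct_smul, smul_eq_mul] at hμv
  have hq : q = 0 := by
    refine (mul_eq_zero.1 (?_ : q * (v ⬝ᵥ β₂ - v ⬝ᵥ β₁) = 0)).resolve_right (sub_ne_zero.2 hβ)
    linear_combination hμv - (v ⬝ᵥ β₁) * hpq
  simp [hq, show p = 1 by linarith]

end Faces

section Scaling

variable {n : ℕ}

noncomputable def scale (v : Fin n → ℝ) (t : ℝ) (x : Fin n → ℝ) : Fin n → ℝ :=
  fun i => x i * t ^ v i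

variable {v x : Fin n → ℝ} {t : ℝ}

@[simp]
lemma scale_one (v x : Fin n → ℝ) : scale v 1 x = x := by
  funext i; simp [scale]

lemma scale_pos (ht : 0 < t) (hx : ∀ i, 0 < x i) : ∀ i, 0 < scale v t x i :=
  fun i => mul_pos (hx i) (Real.rpow_pos_of_pos ht _)

lemma continuous_scale (v : Fin n → ℝ) (t : ℝ) : Continuous (scale v t) :=
  continuous_pi fun i => (continuous_apply i).mul continuous_const

lemma continuousOn_scale_left (v x : Fin n → ℝ) :
    ContinuousOn (fun t => scale v t x) (Set.Ioi 0) :=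
  continuousOn_pi.2 fun _ =>
    continuousOn_const.mul (continuousOn_id.rpow_const fun _ ht => Or.inl (ne_of_gt ht))

lemma sig_scale {S : Finset (Fin n → ℝ)} {c : (Fin n → ℝ) → ℝ} (ht : 0 < t)
    (hx : ∀ i, 0 < x i) :
    sig S c (scale v t x) = ∑ μ ∈ S, t ^ (v ⬝ᵥ μ) * (c μ * ∏ i, x i ^ μ i) := by
  refine sum_congr rfl fun μ _ => ?_
  have hprod : ∏ i, scale v t x i ^ μ i = t ^ (v ⬝ᵥ μ) * ∏ i, x i ^ μ i := by
    rw [dotProduct, Real.rpow_sum_of_pos ht, ← prod_mul_distrib]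
    refine prod_congr rfl fun i _ => ?_
    rw [scale, Real.mul_rpow (hx i).le (Real.rpow_pos_of_pos ht _).le, ← Real.rpow_mul ht.le,
      mul_comm]
  rw [hprod]
  ring

lemma sig_scale_of_forall_dotProduct_eq {S : Finset (Fin n → ℝ)} {c : (Fin n → ℝ) → ℝ}
    {a : ℝ} (hS : ∀ μ ∈ S, v ⬝ᵥ μ = a) (ht : 0 < t) (hx : ∀ i, 0 < x i) :
    sig S c (scale v t x) = t ^ a * sig S c x := by
  rw [sig_scale ht hx, sig, mul_sum]
  exact sum_congr rfl fun μ hμ => by rw [hS μ hμ]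

lemma joinedIn_scale {N : Set (Fin n → ℝ)} {T : ℝ} (hT : 1 ≤ T)
    (h : ∀ t ∈ Set.Icc 1 T, scale v t x ∈ N) : JoinedIn N x (scale v T x) := by
  have hpc : IsPathConnected ((fun t => scale v t x) '' Set.Icc 1 T) :=
    ((convex_Icc 1 T).isPathConnected (Set.nonempty_Icc.2 hT)).image'
      ((continuousOn_scale_left v x).mono fun t ht => zero_lt_one.trans_le ht.1)
  have hj := hpc.joinedIn _ ⟨1, Set.left_mem_Icc.2 hT, rfl⟩ _ ⟨T, Set.right_mem_Icc.2 hT, rfl⟩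
  simpa using hj.mono (Set.image_subset_iff.2 h)

end Scaling

section Signomials

variable {n : ℕ} {c : (Fin n → ℝ) → ℝ}

lemma continuousOn_sig (S : Finset (Fin n → ℝ)) (c : (Fin n → ℝ) → ℝ) :
    ContinuousOn (sig S c) {x | ∀ i, 0 < x i} :=
  continuousOn_finsetSum S fun _ _ => continuousOn_const.mul <| continuousOn_finsetProd _
    fun i _ => (continuous_apply i).continuousOn.rpow_const fun _ hx => Or.inl (hx i).ne'

lemma isOpen_negSet (S : Finset (Fin n → ℝ)) (c : (Fin n → ℝ) → ℝ) : IsOpen (negSet S c) := by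
  have hpos : IsOpen {x : Fin n → ℝ | ∀ i, 0 < x i} := by
    simpa [Set.pi, Set.mem_Ioi] using
      isOpen_set_pi Set.finite_univ fun (_ : Fin n) _ => isOpen_Ioi (a := (0 : ℝ))
  exact (continuousOn_sig S c).isOpen_inter_preimage hpos isOpen_Iio

lemma sig_union {S₁ S₂ : Finset (Fin n → ℝ)} (h : Disjoint S₁ S₂) (x : Fin n → ℝ) :
    sig (S₁ ∪ S₂) c x = sig S₁ c x + sig S₂ c x :=
  sum_union h

lemma negSetOn_eq (S : Finset (Fin n → ℝ)) (c : (Fin n → ℝ) → ℝ) (F : Set (Fin n → ℝ))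
    [DecidablePred (· ∈ F)] : negSetOn S c F = negSet (S.filter (· ∈ F)) c := by
  ext x
  simp only [negSetOn, negSet, sigOn, sig, sum_filter]
  congr!

lemma eventually_sig_scale_one_neg {S : Finset (Fin n → ℝ)} {w β : Fin n → ℝ} (hβ : β ∈ S)
    (hc : c β < 0) (hmax : ∀ μ ∈ S, μ ≠ β → w ⬝ᵥ μ < w ⬝ᵥ β) :
    ∀ᶠ t in atTop, sig S c (scale w t 1) < 0 := by
  classical
  have hterm : ∀ μ ∈ S, Tendsto (fun t : ℝ => t ^ (w ⬝ᵥ μ - w ⬝ᵥ β) * c μ) atTop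
      (𝓝 (if μ = β then c β else 0)) := by
    intro μ hμ
    by_cases h : μ = β
    · subst h
      simp
    · simpa [h] using
        (tendsto_rpow_neg_atTop (sub_pos.2 (hmax μ hμ h))).mul_const (c μ)
  have hlim := tendsto_finsetSum S hterm
  rw [sum_ite_eq', if_pos hβ] at hlim
  filter_upwards [hlim.eventually_lt_const hc, eventually_gt_atTop 0] with t hneg ht
  have hsplit : sig S c (scale w t 1) =
      t ^ (w ⬝ᵥ β) * ∑ μ ∈ S, t ^ (w ⬝ᵥ μ - w ⬝ᵥ β) * c μ := by
    rw [sig_scale (x := 1) ht fun _ => one_pos, mul_sum]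
    refine sum_congr rfl fun μ _ => ?_
    simp only [Pi.one_apply, Real.one_rpow, prod_const_one, mul_one]
    rw [← mul_assoc, ← Real.rpow_add ht, add_sub_cancel]
  rw [hsplit]
  exact mul_neg_of_pos_of_neg (Real.rpow_pos_of_pos ht _) hneg

end Signomials

lemma IsCompact.eventually_forall_mul_add_neg {X : Type*} [TopologicalSpace X] {K : Set X}
    (hK : IsCompact K) {g h : X → ℝ} (hg : ContinuousOn g K) (hh : ContinuousOn h K)
    (hneg : ∀ y ∈ K, g y < 0) : ∀ᶠ s in atTop, ∀ y ∈ K, s * g y + h y < 0 := by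
  rcases K.eq_empty_or_nonempty with rfl | hne
  · simp
  obtain ⟨y₀, hy₀K, hy₀⟩ := hK.exists_isMaxOn hne hg
  obtain ⟨M, hM⟩ := hK.bddAbove_image hh
  have hlim : Tendsto (fun s => s * g y₀ + M) atTop atBot :=
    tendsto_atBot_add_const_right _ M (tendsto_id.atTop_mul_const_of_neg (hneg y₀ hy₀K))
  filter_upwards [hlim.eventually_lt_atBot 0, eventually_ge_atTop 0] with s hs hs0 y hy
  calc s * g y + h y ≤ s * g y₀ + M :=
        add_le_add (mul_le_mul_of_nonneg_left (hy₀ hy) hs0) (hM ⟨y, hy, rfl⟩)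
    _ < 0 := hs

section TwoLevels

variable {n : ℕ} {S₁ S₂ : Finset (Fin n → ℝ)} {c : (Fin n → ℝ) → ℝ} {v : Fin n → ℝ} {a b : ℝ}

/-- As `t → ∞` the flow `t^v` lets the upper level `S₁` dominate; a path in the negative set of
`f|_{S₁}` is compact, so one `T` pushes all of it into the negative set of `f`. -/
lemma joinedIn_negSet_union (hab : b < a) (hdisj : Disjoint S₁ S₂)
    (ha : ∀ μ ∈ S₁, v ⬝ᵥ μ = a) (hb : ∀ μ ∈ S₂, v ⬝ᵥ μ = b)
    (h₁ : IsPreconnected (negSet S₁ c)) {x z : Fin n → ℝ}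
    (hx : x ∈ negSet (S₁ ∪ S₂) c) (hx₁ : x ∈ negSet S₁ c)
    (hz : z ∈ negSet (S₁ ∪ S₂) c) (hz₁ : z ∈ negSet S₁ c) :
    JoinedIn (negSet (S₁ ∪ S₂) c) x z := by
  set N := negSet (S₁ ∪ S₂) c
  have hmem : ∀ y : Fin n → ℝ, (∀ i, 0 < y i) → ∀ t : ℝ, 0 < t →
      t ^ (a - b) * sig S₁ c y + sig S₂ c y < 0 → scale v t y ∈ N := by
    intro y hy t ht hneg
    refine ⟨scale_pos ht hy, ?_⟩
    have hsplit : sig (S₁ ∪ S₂) c (scale v t y) =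
        t ^ b * (t ^ (a - b) * sig S₁ c y + sig S₂ c y) := by
      rw [sig_union hdisj, sig_scale_of_forall_dotProduct_eq ha ht hy,
        sig_scale_of_forall_dotProduct_eq hb ht hy, mul_add, ← mul_assoc, ← Real.rpow_add ht,
        add_sub_cancel]
    rw [hsplit]
    exact mul_neg_of_pos_of_neg (Real.rpow_pos_of_pos ht _) hneg
  have hray : ∀ y ∈ N, y ∈ negSet S₁ c → ∀ t : ℝ, 1 ≤ t → scale v t y ∈ N := by
    intro y hy hy₁ t ht
    have hpow : 1 ≤ t ^ (a - b) := Real.one_le_rpow ht (sub_nonneg.2 hab.le)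
    have hy' := hy.2
    rw [sig_union hdisj] at hy'
    exact hmem y hy.1 t (zero_lt_one.trans_le ht) (by nlinarith [hy₁.2])
  obtain ⟨γ, hγ⟩ := ((isOpen_negSet S₁ c).isConnected_iff_isPathConnected.1
    ⟨⟨x, hx₁⟩, h₁⟩).joinedIn x hx₁ z hz₁
  have hKpos : Set.range γ ⊆ {y | ∀ i, 0 < y i} := by
    rintro _ ⟨u, rfl⟩
    exact (hγ u).1
  obtain ⟨T, hT, hT1⟩ := ((tendsto_rpow_atTop (sub_pos.2 hab)).eventually
    ((isCompact_range γ.continuous).eventually_forall_mul_add_neg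
      ((continuousOn_sig S₁ c).mono hKpos) ((continuousOn_sig S₂ c).mono hKpos)
      (by rintro _ ⟨u, rfl⟩; exact (hγ u).2))).and (eventually_ge_atTop 1) |>.exists
  have hmid : JoinedIn N (scale v T x) (scale v T z) :=
    ((show JoinedIn (Set.range γ) x z from ⟨γ, fun u => ⟨u, rfl⟩⟩).map
      (continuous_scale v T)).mono
      (Set.image_subset_iff.2 fun y hy =>
        hmem y (hKpos hy) T (zero_lt_one.trans_le hT1) (hT y hy))
  exact ((joinedIn_scale hT1 fun t ht => hray x hx hx₁ t ht.1).trans hmid).trans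
    (joinedIn_scale hT1 fun t ht => hray z hz hz₁ t ht.1).symm

theorem isPathConnected_negSet_union (hab : b < a) (hdisj : Disjoint S₁ S₂)
    (ha : ∀ μ ∈ S₁, v ⬝ᵥ μ = a) (hb : ∀ μ ∈ S₂, v ⬝ᵥ μ = b)
    (h₁ : IsPreconnected (negSet S₁ c)) (h₂ : IsPreconnected (negSet S₂ c)) {z : Fin n → ℝ}
    (hz₁ : z ∈ negSet S₁ c) (hz₂ : z ∈ negSet S₂ c) :
    IsPathConnected (negSet (S₁ ∪ S₂) c) := by
  have hz : z ∈ negSet (S₁ ∪ S₂) c := ⟨hz₁.1, by rw [sig_union hdisj]; linarith [hz₁.2, hz₂.2]⟩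
  refine ⟨z, hz, fun {x} hx => ?_⟩
  by_cases hx₁ : sig S₁ c x < 0
  · exact (joinedIn_negSet_union hab hdisj ha hb h₁ hx ⟨hx.1, hx₁⟩ hz hz₁).symm
  · have hx₂ : sig S₂ c x < 0 := by
      have := hx.2
      rw [sig_union hdisj] at this
      linarith
    rw [union_comm] at hx hz ⊢
    exact (joinedIn_negSet_union (v := -v) (neg_lt_neg hab) hdisj.symm
      (fun μ hμ => by rw [neg_dotProduct, hb μ hμ]) (fun μ hμ => by rw [neg_dotProduct, ha μ hμ])
      h₂ hx ⟨hx.1, hx₂⟩ hz hz₂).symm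

lemma exists_mem_negSet_inter_of_edge {S : Finset (Fin n → ℝ)} {w β₁ β₂ : Fin n → ℝ}
    (hS₁ : S₁ ⊆ S) (hS₂ : S₂ ⊆ S) (hβ₁ : β₁ ∈ S₁) (hβ₂ : β₂ ∈ S₂) (hc₁ : c β₁ < 0)
    (hc₂ : c β₂ < 0) (hedge : convexHull ℝ {β₁, β₂} = faceOf S w)
    (ha : ∀ μ ∈ S₁, v ⬝ᵥ μ = v ⬝ᵥ β₁) (hb : ∀ μ ∈ S₂, v ⬝ᵥ μ = v ⬝ᵥ β₂)
    (hβ : v ⬝ᵥ β₂ ≠ v ⬝ᵥ β₁) : ∃ z, z ∈ negSet S₁ c ∧ z ∈ negSet S₂ c := by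
  have hneg₁ := eventually_sig_scale_one_neg hβ₁ hc₁ fun μ hμ hne =>
    dotProduct_lt_of_convexHull_pair_eq_faceOf hedge hβ (hS₁ hμ) (ha μ hμ) hne
  have hneg₂ := eventually_sig_scale_one_neg hβ₂ hc₂ fun μ hμ hne =>
    dotProduct_lt_of_convexHull_pair_eq_faceOf (Set.pair_comm β₁ β₂ ▸ hedge) hβ.symm
      (hS₂ hμ) (hb μ hμ) hne
  obtain ⟨t, ht, h₁, h₂⟩ := ((eventually_gt_atTop 0).and (hneg₁.and hneg₂)).exists
  have hpos := scale_pos (v := w) (x := 1) ht fun _ => one_pos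
  exact ⟨scale w t 1, And.intro hpos h₁, And.intro hpos h₂⟩

end TwoLevels

theorem stmt_14_general (n : ℕ) (S : Finset (Fin n → ℝ)) (c : (Fin n → ℝ) → ℝ)
    (v : Fin n → ℝ)
    (hcov : (↑S : Set (Fin n → ℝ)) ⊆ faceOf S v ∪ faceOf S (-v))
    (h1 : compCard (negSetOn S c (faceOf S v)) = 1)
    (h2 : compCard (negSetOn S c (faceOf S (-v))) = 1)
    (β₁ β₂ : Fin n → ℝ)
    (hβ₁ : β₁ ∈ sigNegSupp S c ∩ faceOf S v)
    (hβ₂ : β₂ ∈ sigNegSupp S c ∩ faceOf S (-v))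
    (hedge : ∃ w : Fin n → ℝ, convexHull ℝ {β₁, β₂} = faceOf S w) :
    compCard (negSet S c) = 1 := by
  classical
  obtain ⟨⟨hβ₁S, hcβ₁⟩, hβ₁F⟩ := hβ₁
  obtain ⟨⟨hβ₂S, hcβ₂⟩, hβ₂F⟩ := hβ₂
  rw [negSetOn_eq] at h1 h2
  set S₁ := S.filter (· ∈ faceOf S v)
  set S₂ := S.filter (· ∈ faceOf S (-v))
  have hS₁ : ∀ μ ∈ S₁, v ⬝ᵥ μ = v ⬝ᵥ β₁ := fun μ hμ =>
    dotProduct_eq_of_mem_faceOf (mem_filter.1 hμ).2 hβ₁F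
  have hS₂ : ∀ μ ∈ S₂, v ⬝ᵥ μ = v ⬝ᵥ β₂ := fun μ hμ =>
    neg_injective (by simpa only [neg_dotProduct] using
      dotProduct_eq_of_mem_faceOf (mem_filter.1 hμ).2 hβ₂F)
  have hunion : S₁ ∪ S₂ = S :=
    (filter_or _ _ S).symm.trans (filter_true_of_mem fun μ hμ => hcov hμ)
  rcases (dotProduct_le_of_mem_faceOf hβ₁F hβ₂S).lt_or_eq with hlt | heq
  · obtain ⟨w, hw⟩ := hedge
    obtain ⟨z, hz₁, hz₂⟩ := exists_mem_negSet_inter_of_edge (filter_subset _ S)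
      (filter_subset _ S) (mem_filter.2 ⟨hβ₁S, hβ₁F⟩) (mem_filter.2 ⟨hβ₂S, hβ₂F⟩) hcβ₁ hcβ₂ hw
      hS₁ hS₂ hlt.ne
    rw [compCard_eq_one_iff] at h1 h2 ⊢
    have hdisj : Disjoint S₁ S₂ := disjoint_left.2 fun μ hμ₁ hμ₂ =>
      hlt.ne ((hS₂ μ hμ₂).symm.trans (hS₁ μ hμ₁))
    have hpc := isPathConnected_negSet_union hlt hdisj hS₁ hS₂ h1.2 h2.2 hz₁ hz₂
    rw [hunion] at hpc
    exact ⟨hpc.nonempty, hpc.isConnected.isPreconnected⟩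
  · have hlevel : ∀ μ ∈ S, v ⬝ᵥ μ = v ⬝ᵥ β₁ := by
      intro μ hμ
      rcases mem_union.1 (hunion ▸ hμ) with hμ | hμ
      exacts [hS₁ μ hμ, (hS₂ μ hμ).trans heq]
    have hS₁S : S₁ = S := filter_true_of_mem fun μ hμ =>
      mem_faceOf_of_forall_le hμ fun ν hν => (hlevel ν hν).trans (hlevel μ hμ).symm |>.le
    rwa [hS₁S] at h1

/-- Theorem 3.6: if the support lies on two parallel faces, each restriction has exactly one
negative connected component, and there is an edge of the Newton polytope joining a negative
exponent vector on one face to a negative exponent vector on the other, then `f⁻¹(ℝ_{<0})`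
has exactly one connected component. (An edge is a one-dimensional face; since
`Conv({β₁, β₂})` is one-dimensional iff `β₁ ≠ β₂`, being an edge is expressed as being a
face together with `β₁ ≠ β₂`.) -/
theorem stmt_14 (n : ℕ) (S : Finset (Fin n → ℝ)) (c : (Fin n → ℝ) → ℝ)
    (hc : ∀ μ ∈ S, c μ ≠ 0)
    (v : Fin n → ℝ)
    (hcov : (↑S : Set (Fin n → ℝ)) ⊆ faceOf S v ∪ faceOf S (-v))
    (h1 : compCard (negSetOn S c (faceOf S v)) = 1)
    (h2 : compCard (negSetOn S c (faceOf S (-v))) = 1)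
    (β₁ β₂ : Fin n → ℝ)
    (hβ₁ : β₁ ∈ sigNegSupp S c ∩ faceOf S v)
    (hβ₂ : β₂ ∈ sigNegSupp S c ∩ faceOf S (-v))
    (hne : β₁ ≠ β₂)
    (hedge : ∃ w : Fin n → ℝ, convexHull ℝ {β₁, β₂} = faceOf S w) :
    compCard (negSet S c) = 1 :=
  stmt_14_general n S c v hcov h1 h2 β₁ β₂ hβ₁ hβ₂ hedge
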